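/- If D ⊢ +Δp then definitely(p) is included in every stable model of the meta-program M translating D; and if D ⊢ -Δp then definitely(p) is included in no stable model of M. -/

import Mathlib

/-! Core: propositional Defeasible Logic (proof theory via derivations) -/

/-- Literals: positive or negative atoms. -/
inductive Lit : Type
  | pos : ℕ → Lit
  | neg : ℕ → Lit
deriving DecidableEq, Repr

/-- The complement `~q` of a literal. -/
def Lit.compl : Lit → Lit
  | .pos n => .neg n
  | .neg n => .pos n

/-- The three kinds of rules in a defeasible theory. -/
inductive RuleKind : Type
  | strict | defeasible | defeater
deriving DecidableEq, Repr

/-- A rule with a unique label (name), kind, antecedent and literal head. -/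
structure DLRule : Type where
  name : ℕ
  kind : RuleKind
  ante : List Lit
  head : Lit
deriving DecidableEq, Repr

/-- A (finite, propositional) defeasible theory `D = (F, R, >)`. -/
structure DTheory : Type where
  facts : Finset Lit
  rules : Finset DLRule
  sup : DLRule → DLRule → Prop

/-- The four proof tags `+Δ`, `-Δ`, `+∂`, `-∂`. -/
inductive Tag : Type
  | pDelta | mDelta | pPartial | mPartial
deriving DecidableEq, Repr

/-- A tagged literal (a conclusion). -/
abbrev TaggedLit := Tag × Lit

/-- The inference conditions of Defeasible Logic: the tagged literal `c` may
be appended to a derivation whose earlier lines are `prev`. -/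
def ValidLine (D : DTheory) (prev : List TaggedLit) : TaggedLit → Prop
  | (Tag.pDelta, q) =>
      q ∈ D.facts ∨
      ∃ r ∈ D.rules, r.kind = RuleKind.strict ∧ r.head = q ∧
        ∀ a ∈ r.ante, (Tag.pDelta, a) ∈ prev
  | (Tag.mDelta, q) =>
      q ∉ D.facts ∧
      ∀ r ∈ D.rules, r.kind = RuleKind.strict → r.head = q →
        ∃ a ∈ r.ante, (Tag.mDelta, a) ∈ prev
  | (Tag.pPartial, q) =>
      (Tag.pDelta, q) ∈ prev ∨
      ((∃ r ∈ D.rules, r.kind ≠ RuleKind.defeater ∧ r.head = q ∧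
          ∀ a ∈ r.ante, (Tag.pPartial, a) ∈ prev) ∧
       (Tag.mDelta, q.compl) ∈ prev ∧
       ∀ s ∈ D.rules, s.head = q.compl →
         (∃ a ∈ s.ante, (Tag.mPartial, a) ∈ prev) ∨
         (∃ t ∈ D.rules, t.kind ≠ RuleKind.defeater ∧ t.head = q ∧
           (∀ a ∈ t.ante, (Tag.pPartial, a) ∈ prev) ∧ D.sup t s))
  | (Tag.mPartial, q) =>
      (Tag.mDelta, q) ∈ prev ∧
      ((∀ r ∈ D.rules, r.kind ≠ RuleKind.defeater → r.head = q →
          ∃ a ∈ r.ante, (Tag.mPartial, a) ∈ prev) ∨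
       (Tag.pDelta, q.compl) ∈ prev ∨
       (∃ s ∈ D.rules, s.head = q.compl ∧
          (∀ a ∈ s.ante, (Tag.pPartial, a) ∈ prev) ∧
          ∀ t ∈ D.rules, t.kind ≠ RuleKind.defeater → t.head = q →
            (∃ a ∈ t.ante, (Tag.mPartial, a) ∈ prev) ∨ ¬ D.sup t s))

/-- `P` is a derivation in `D`: a finite sequence of tagged literals each of
which satisfies the inference conditions w.r.t. the earlier lines. -/
def IsDerivation (D : DTheory) (P : List TaggedLit) : Prop :=
  ∀ (i : ℕ) (h : i < P.length), ValidLine D (P.take i) (P.get ⟨i, h⟩)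

/-- `D ⊢ (t, q)` : the tagged literal is a line of some derivation in `D`. -/
def Proves (D : DTheory) (t : Tag) (q : Lit) : Prop :=
  ∃ P : List TaggedLit, IsDerivation D P ∧ (t, q) ∈ P

/-- `D ⊢ +Δ q`. -/
abbrev PDelta (D : DTheory) (q : Lit) : Prop := Proves D Tag.pDelta q
/-- `D ⊢ -Δ q`. -/
abbrev MDelta (D : DTheory) (q : Lit) : Prop := Proves D Tag.mDelta q
/-- `D ⊢ +∂ q`. -/
abbrev PPartial (D : DTheory) (q : Lit) : Prop := Proves D Tag.pPartial q
/-- `D ⊢ -∂ q`. -/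
abbrev MPartial (D : DTheory) (q : Lit) : Prop := Proves D Tag.mPartial q

/-- `q` is strictly unknowable in `D`. -/
def StrictlyUnknowable (D : DTheory) (q : Lit) : Prop := ¬ PDelta D q ∧ ¬ MDelta D q

/-- `q` is defeasibly unknowable in `D`. -/
def DefeasiblyUnknowable (D : DTheory) (q : Lit) : Prop := ¬ PPartial D q ∧ ¬ MPartial D q

/-- `q` is unknowable in `D`. -/
def Unknowable (D : DTheory) (q : Lit) : Prop :=
  StrictlyUnknowable D q ∨ DefeasiblyUnknowable D q

/-- The point `{q, ~q}` of the dependency graph corresponding to a literal `q`. -/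
def Lit.pt (q : Lit) : Set Lit := {q, q.compl}

/-- Arc of the dependency graph `DG(D)` from point `{b,~b}` to point `{a,~a}`:
there is a strict or defeasible rule whose head is in `{b,~b}` and some antecedent
in `{a,~a}`.  (Stated on representative literals; it is complement-invariant.) -/
def DepArc (D : DTheory) (b a : Lit) : Prop :=
  ∃ r ∈ D.rules, r.kind ≠ RuleKind.defeater ∧
    (r.head = b ∨ r.head = b.compl) ∧ (a ∈ r.ante ∨ a.compl ∈ r.ante)

/-- `D` is decisive iff its dependency graph is acyclic. -/
def Decisive (D : DTheory) : Prop := ∀ q : Lit, ¬ Relation.TransGen (DepArc D) q q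

/-! Core: atoms of the meta-language of the logic-programming translation -/

/-- Ground atoms of the meta-program: `fact`, `strict`, `defeasible`, `defeater`,
`sup`, `definitely`, `defeasibly`, `overruled`, `defeated`, `supportive_rule`, `rule`. -/
inductive MAtom : Type
  | fact : Lit → MAtom
  | strict : ℕ → Lit → List Lit → MAtom
  | defeasible : ℕ → Lit → List Lit → MAtom
  | defeater : ℕ → Lit → List Lit → MAtom
  | sup : ℕ → ℕ → MAtom
  | definitely : Lit → MAtom
  | defeasibly : Lit → MAtom
  | overruled : ℕ → Lit → MAtom
  | defeated : ℕ → Lit → MAtom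
  | supportive_rule : ℕ → Lit → List Lit → MAtom
  | rule : ℕ → Lit → List Lit → MAtom
deriving DecidableEq

/-! Core: logic programs, Gelfond–Lifschitz reduct, stable models -/

/-- A program clause `head ← pos₁,…,posₙ, not neg₁,…, not negₘ` over atoms `α`. -/
structure LPClause (α : Type) : Type where
  head : α
  pos : List α
  neg : List α

/-- The least Herbrand model of a definite program (given as head/body pairs). -/
def leastModel {α : Type} (Q : Set (α × List α)) : Set α :=
  ⋂₀ {I : Set α | ∀ c ∈ Q, (∀ b ∈ c.2, b ∈ I) → c.1 ∈ I}

/-- The Gelfond–Lifschitz reduct `P^M`. -/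
def reduct {α : Type} (P : Set (LPClause α)) (M : Set α) : Set (α × List α) :=
  {c | ∃ cl ∈ P, (∀ a ∈ cl.neg, a ∉ M) ∧ c = (cl.head, cl.pos)}

/-- `M` is a stable model of `P` iff it is the least Herbrand model of `P^M`. -/
def IsStableModel {α : Type} (P : Set (LPClause α)) (M : Set α) : Prop :=
  M = leastModel (reduct P M)

/-! Core: the meta-program `M(D)` translating a defeasible theory into a logic program -/

/-- The meta-program `M` for a defeasible theory `D`: the meta-clauses for
`definitely`, `defeasibly`, `overruled`, `defeated`, `supportive_rule`, `rule`
(ground instances) together with the facts encoding `D`. -/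
def metaProgram (D : DTheory) : Set (LPClause MAtom) :=
  {c |
    -- facts encoding D
    (∃ p ∈ D.facts, c = ⟨.fact p, [], []⟩) ∨
    (∃ r ∈ D.rules, r.kind = RuleKind.strict ∧
       c = ⟨.strict r.name r.head r.ante, [], []⟩) ∨
    (∃ r ∈ D.rules, r.kind = RuleKind.defeasible ∧
       c = ⟨.defeasible r.name r.head r.ante, [], []⟩) ∨
    (∃ r ∈ D.rules, r.kind = RuleKind.defeater ∧
       c = ⟨.defeater r.name r.head r.ante, [], []⟩) ∨
    (∃ r ∈ D.rules, ∃ s ∈ D.rules, D.sup r s ∧ c = ⟨.sup r.name s.name, [], []⟩) ∨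
    -- supportive_rule and rule
    (∃ (N : ℕ) (H : Lit) (B : List Lit),
       c = ⟨.supportive_rule N H B, [.strict N H B], []⟩) ∨
    (∃ (N : ℕ) (H : Lit) (B : List Lit),
       c = ⟨.supportive_rule N H B, [.defeasible N H B], []⟩) ∨
    (∃ (N : ℕ) (H : Lit) (B : List Lit),
       c = ⟨.rule N H B, [.supportive_rule N H B], []⟩) ∨
    (∃ (N : ℕ) (H : Lit) (B : List Lit),
       c = ⟨.rule N H B, [.defeater N H B], []⟩) ∨
    -- definitely
    (∃ X : Lit, c = ⟨.definitely X, [.fact X], []⟩) ∨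
    (∃ (R : ℕ) (X : Lit) (Ys : List Lit),
       c = ⟨.definitely X, .strict R X Ys :: Ys.map .definitely, []⟩) ∨
    -- defeasibly
    (∃ X : Lit, c = ⟨.defeasibly X, [.definitely X], []⟩) ∨
    (∃ (R : ℕ) (X : Lit) (Ys : List Lit),
       c = ⟨.defeasibly X, .supportive_rule R X Ys :: Ys.map .defeasibly,
            [.definitely X.compl, .overruled R X]⟩) ∨
    -- overruled
    (∃ (R S : ℕ) (X : Lit) (Us : List Lit),
       c = ⟨.overruled R X, .rule S X.compl Us :: Us.map .defeasibly,
            [.defeated S X.compl]⟩) ∨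
    -- defeated
    (∃ (S T : ℕ) (X : Lit) (Vs : List Lit),
       c = ⟨.defeated S X.compl, .sup T S :: .supportive_rule T X Vs ::
            Vs.map .defeasibly, []⟩)}

/-- The least model is closed under the clauses. -/
lemma leastModel_closed {α : Type} (Q : Set (α × List α)) :
    ∀ c ∈ Q, (∀ b ∈ c.2, b ∈ leastModel Q) → c.1 ∈ leastModel Q := by
  intro c hc hb
  intro I hI
  exact hI c hc (fun b hbb => hb b hbb I hI)

/-- The least model is contained in every closed set. -/
lemma leastModel_subset {α : Type} (Q : Set (α × List α)) (I : Set α)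
    (hI : ∀ c ∈ Q, (∀ b ∈ c.2, b ∈ I) → c.1 ∈ I) : leastModel Q ⊆ I :=
  Set.sInter_subset_of_mem hI

/-- Specification of `-Δ` provability. -/
lemma mdelta_spec (D : DTheory) (q : Lit) (h : MDelta D q) :
    q ∉ D.facts ∧ ∀ r ∈ D.rules, r.kind = RuleKind.strict → r.head = q →
      ∃ a ∈ r.ante, MDelta D a := by
  obtain ⟨P, hP, hm⟩ := h
  obtain ⟨⟨i, hi⟩, hget⟩ := List.mem_iff_get.mp hm
  have hv := hP i hi
  rw [hget] at hv
  refine ⟨hv.1, fun r hr hk hh => ?_⟩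
  obtain ⟨a, ha, hmem⟩ := hv.2 r hr hk hh
  exact ⟨a, ha, P, hP, (List.take_prefix i P).subset hmem⟩

/-- Theorem 6 (a),(b): if `D ⊢ +Δp` then `definitely(p)` is in
every stable model of the meta-program `M`; if `D ⊢ -Δp` then `definitely(p)` is
in no stable model of `M`. -/
theorem stable_definitely (D : DTheory) (p : Lit) :
    (PDelta D p → ∀ M : Set MAtom, IsStableModel (metaProgram D) M →
      MAtom.definitely p ∈ M) ∧
    (MDelta D p → ∀ M : Set MAtom, IsStableModel (metaProgram D) M →
      MAtom.definitely p ∉ M) := by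
  constructor
  · -- +Δ part
    rintro ⟨P, hP, hmem⟩ M hM
    have hclosed : ∀ c ∈ reduct (metaProgram D) M, (∀ b ∈ c.2, b ∈ M) → c.1 ∈ M := by
      intro c hc hb
      rw [hM] at hb ⊢
      exact leastModel_closed _ c hc hb
    have key : ∀ n q (h : n < P.length), P.get ⟨n, h⟩ = (Tag.pDelta, q) →
        MAtom.definitely q ∈ M := by
      intro n
      induction n using Nat.strong_induction_on with
      | _ n ih =>
        intro q h hget
        have hv := hP n h
        rw [hget] at hv
        rcases hv with hfact | ⟨r, hr, hk, hh, hante⟩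
        · -- q is a fact
          have h1 : MAtom.fact q ∈ M := by
            refine hclosed (MAtom.fact q, []) ?_ (by simp)
            exact ⟨⟨.fact q, [], []⟩, Or.inl ⟨q, hfact, rfl⟩, by simp, rfl⟩
          refine hclosed (MAtom.definitely q, [MAtom.fact q]) ?_ (by simpa)
          exact ⟨⟨.definitely q, [.fact q], []⟩,
            by { apply Or.inr; apply Or.inr; apply Or.inr; apply Or.inr; apply Or.inr;
                 apply Or.inr; apply Or.inr; apply Or.inr; apply Or.inr; apply Or.inl;
                 exact ⟨q, rfl⟩ }, by simp, rfl⟩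
        · -- via a strict rule r
          have hstrict : MAtom.strict r.name q r.ante ∈ M := by
            refine hclosed (MAtom.strict r.name q r.ante, []) ?_ (by simp)
            refine ⟨⟨.strict r.name q r.ante, [], []⟩, ?_, by simp, rfl⟩
            exact Or.inr (Or.inl ⟨r, hr, hk, by rw [hh]⟩)
          have hante' : ∀ a ∈ r.ante, MAtom.definitely a ∈ M := by
            intro a ha
            obtain ⟨⟨j, hj⟩, hgj⟩ := List.mem_iff_get.mp (hante a ha)
            have hjn : j < n := by
              have := hj; simp [List.length_take] at this; omega
            have hjP : j < P.length := by
              have := hj; simp [List.length_take] at this; omega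
            have : P.get ⟨j, hjP⟩ = (Tag.pDelta, a) := by
              rw [← hgj]; simp [List.getElem_take]
            exact ih j hjn a hjP this
          refine hclosed (MAtom.definitely q,
            MAtom.strict r.name q r.ante :: r.ante.map MAtom.definitely) ?_ ?_
          · refine ⟨⟨.definitely q, .strict r.name q r.ante :: r.ante.map .definitely, []⟩,
              ?_, by simp, rfl⟩
            apply Or.inr; apply Or.inr; apply Or.inr; apply Or.inr; apply Or.inr
            apply Or.inr; apply Or.inr; apply Or.inr; apply Or.inr; apply Or.inr
            exact Or.inl ⟨r.name, q, r.ante, rfl⟩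
          · intro b hb
            rcases List.mem_cons.mp hb with hb | hb
            · rw [hb]; exact hstrict
            · obtain ⟨a, ha, rfl⟩ := List.mem_map.mp hb
              exact hante' a ha
    obtain ⟨⟨i, hi⟩, hget⟩ := List.mem_iff_get.mp hmem
    exact key i p hi hget
  · -- -Δ part
    intro hm M hM hpin
    have hclosed : ∀ c ∈ reduct (metaProgram D) M, (∀ b ∈ c.2, b ∈ M) → c.1 ∈ M := by
      intro c hc hb
      rw [hM] at hb ⊢
      exact leastModel_closed _ c hc hb
    set I : Set MAtom := {a | a ∈ M ∧
      (∀ q, a = MAtom.fact q → q ∈ D.facts) ∧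
      (∀ R X Ys, a = MAtom.strict R X Ys →
        ∃ r ∈ D.rules, r.kind = RuleKind.strict ∧ r.name = R ∧ r.head = X ∧ r.ante = Ys) ∧
      (∀ q, a = MAtom.definitely q → ¬ MDelta D q)} with hIdef
    have triv : ∀ a, a ∈ M → (∀ q, a ≠ MAtom.fact q) →
        (∀ R X Ys, a ≠ MAtom.strict R X Ys) → (∀ q, a ≠ MAtom.definitely q) → a ∈ I :=
      fun a ha h1 h2 h3 => ⟨ha, fun q hq => absurd hq (h1 q),
        fun R X Ys hq => absurd hq (h2 R X Ys), fun q hq => absurd hq (h3 q)⟩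
    have hIclosed : ∀ c ∈ reduct (metaProgram D) M, (∀ b ∈ c.2, b ∈ I) → c.1 ∈ I := by
      rintro c ⟨cl, hcl, hneg, rfl⟩ hb
      have hbM : ∀ b ∈ cl.pos, b ∈ M := fun b hbb => (hb b hbb).1
      have hheadM : cl.head ∈ M := hclosed (cl.head, cl.pos) ⟨cl, hcl, hneg, rfl⟩ hbM
      rcases hcl with ⟨p, hp, rfl⟩ | ⟨r, hr, hk, rfl⟩ | ⟨r, hr, hk, rfl⟩ | ⟨r, hr, hk, rfl⟩ |
        ⟨r, hr, s, hs, hsup, rfl⟩ | ⟨N, H, B, rfl⟩ | ⟨N, H, B, rfl⟩ | ⟨N, H, B, rfl⟩ |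
        ⟨N, H, B, rfl⟩ | ⟨X, rfl⟩ | ⟨R, X, Ys, rfl⟩ | ⟨X, rfl⟩ | ⟨R, X, Ys, rfl⟩ |
        ⟨R, S, X, Us, rfl⟩ | ⟨S, T, X, Vs, rfl⟩
      · -- fact p
        refine ⟨hheadM, ?_, by simp, by simp⟩
        intro q hq
        cases hq
        exact hp
      · -- strict rule fact
        refine ⟨hheadM, by simp, ?_, by simp⟩
        intro R X Ys hq
        cases hq
        exact ⟨r, hr, hk, rfl, rfl, rfl⟩
      · exact triv _ hheadM (by simp) (by simp) (by simp)
      · exact triv _ hheadM (by simp) (by simp) (by simp)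
      · exact triv _ hheadM (by simp) (by simp) (by simp)
      · exact triv _ hheadM (by simp) (by simp) (by simp)
      · exact triv _ hheadM (by simp) (by simp) (by simp)
      · exact triv _ hheadM (by simp) (by simp) (by simp)
      · exact triv _ hheadM (by simp) (by simp) (by simp)
      · -- definitely X :- fact X
        refine ⟨hheadM, by simp, by simp, ?_⟩
        intro q hq hMD
        cases hq
        have hfX : MAtom.fact X ∈ I := hb _ (by simp)
        exact (mdelta_spec D X hMD).1 (hfX.2.1 X rfl)
      · -- definitely X :- strict R X Ys, definitely Ys
        refine ⟨hheadM, by simp, by simp, ?_⟩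
        intro q hq hMD
        cases hq
        have hsX : MAtom.strict R X Ys ∈ I := hb _ (by simp)
        obtain ⟨r, hr, hk, hname, hhead, hante⟩ := hsX.2.2.1 R X Ys rfl
        obtain ⟨a, ha, hMDa⟩ := (mdelta_spec D X hMD).2 r hr hk hhead
        have hda : MAtom.definitely a ∈ I := by
          refine hb _ ?_
          simp only [List.mem_cons, List.mem_map]
          exact Or.inr ⟨a, hante ▸ ha, rfl⟩
        exact hda.2.2.2 a rfl hMDa
      · exact triv _ hheadM (by simp) (by simp) (by simp)
      · exact triv _ hheadM (by simp) (by simp) (by simp)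
      · exact triv _ hheadM (by simp) (by simp) (by simp)
      · exact triv _ hheadM (by simp) (by simp) (by simp)
    have hsub : M ⊆ I := by
      intro a ha
      rw [hM] at ha
      exact leastModel_subset _ I hIclosed ha
    exact (hsub hpin).2.2.2 p rfl hm
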